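/- Let G be a finite group whose Sylow p-subgroup is abelian, and let H be a normal p-subgroup of G. Then N(G) = N(H ⋊ G/H), where H ⋊ G/H is the semidirect product with respect to the natural conjugation action of G/H on H. -/

import Mathlib

/-!
Common definitions: the set `N(G)` of conjugacy class sizes, `A`-groups,
the largest `p`-power `|G||_p` dividing an element of `N(G)`, the Fitting subgroup,
and the natural conjugation action of `G ⧸ H` on an abelian normal subgroup `H`
(used to form the semidirect product `H ⋊ G/H`).
-/

/-- `N(G)`: the set of conjugacy class sizes (indices of centralizers) of `G`. -/
def indexSet (G : Type*) [Group G] : Set ℕ :=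
  {n | ∃ x : G, n = (Subgroup.centralizer {x}).index}

/-- A finite group is an `A`-group if all its Sylow subgroups are abelian. -/
def IsAGroup (G : Type*) [Group G] : Prop :=
  ∀ (p : ℕ), p.Prime → ∀ P : Sylow p G, ∀ a b : (P : Subgroup G), a * b = b * a

/-- `|G||_p`: the highest power of `p` dividing some element of `N(G)`. -/
noncomputable def maxPPart (G : Type*) [Group G] (p : ℕ) : ℕ :=
  sSup {m | (∃ k : ℕ, m = p ^ k) ∧ ∃ n ∈ indexSet G, m ∣ n}

open scoped Classical in
/-- The natural action of `G ⧸ H` on an abelian normal subgroup `H`, induced by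
conjugation (`h ↦ g * h * g⁻¹`); it is used to form the semidirect product `H ⋊ G/H`.
(Junk value — the trivial action — if `H` is not abelian; see `quotConj_eq` below.) -/
noncomputable def quotConj (G : Type*) [Group G] (H : Subgroup G) [H.Normal] :
    G ⧸ H →* MulAut ↥H :=
  if h : H ≤ (MulAut.conjNormal (H := H)).ker then
    QuotientGroup.lift H MulAut.conjNormal h
  else 1

/-- When `H` is abelian, `quotConj` is indeed the conjugation action `h ↦ g * h * g⁻¹`. -/
theorem quotConj_eq (G : Type*) [Group G] (H : Subgroup G) [H.Normal]
    (hab : ∀ a b : ↥H, a * b = b * a) (g : G) :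
    quotConj G H (g : G ⧸ H) = MulAut.conjNormal g := by
  have hker : H ≤ (MulAut.conjNormal (H := H)).ker := by
    intro x hx
    rw [MonoidHom.mem_ker]
    ext y
    have h2 : x * (y : G) = (y : G) * x := congrArg Subtype.val (hab ⟨x, hx⟩ y)
    simp only [MulAut.conjNormal_apply, MulAut.one_apply]
    rw [mul_inv_eq_iff_eq_mul]
    exact h2
  rw [quotConj, dif_pos hker]
  rfl

/-- The Fitting subgroup: the join of all normal nilpotent subgroups. -/
def fitting (G : Type*) [Group G] : Subgroup G :=
  ⨆ H ∈ {H : Subgroup G | H.Normal ∧ Group.IsNilpotent ↥H}, H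

instance fitting_normal (G : Type*) [Group G] : (fitting G).Normal := by
  constructor
  intro n hn g
  rw [fitting, iSup_subtype'] at hn ⊢
  refine Subgroup.iSup_induction _
    (C := fun x => g * x * g⁻¹ ∈
      ⨆ H : {H : Subgroup G | H.Normal ∧ Group.IsNilpotent ↥H}, (H : Subgroup G))
    hn (fun H x hx => ?_) ?_ (fun x y hx hy => ?_)
  · exact Subgroup.mem_iSup_of_mem H (H.2.1.conj_mem x hx g)
  · simpa using Subgroup.one_mem _
  · have h2 := Subgroup.mul_mem _ hx hy
    have h3 : g * (x * y) * g⁻¹ = (g * x * g⁻¹) * (g * y * g⁻¹) := by group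
    show g * (x * y) * g⁻¹ ∈ _
    rwa [h3]

/-!
For `x ∈ G` write `⁅x, H⁆ = {⁅x, k⁆ | k ∈ H}`; as `H` is abelian this is a subgroup of `H`.
In `G`, and in `H ⋊ G/H` at an element `(h, x̄)`, the centralizer maps to `G/H` with kernel
`C_H(x)`; its image consists of the `ȳ` commuting with `x̄` such that `⁅y, x⁆ ∈ ⁅x, H⁆` in the
first case, and such that `⁅y, h⁆ ∈ ⁅x, H⁆` in the second. So the two centralizers have the same
order as soon as the cocycle `y ↦ ⁅y, x⁆` of the preimage `D` of `C_{G/H}(x̄)`, read in the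
abelian `p`-group `H / ⁅x, H⁆`, is the coboundary of `h`. This cocycle vanishes on `p`-elements
`y`: for `n` the `p'`-part of `|G|`, the `p`-elements `y` and `x ^ n` commute modulo the
`p`-group `H`, so they generate a `p`-group, which is abelian, and `⁅y, x⁆ ^ n ≡ ⁅y, x ^ n⁆ = 1`.
Since a Sylow `p`-subgroup of `D` has index prime to `p`, averaging over its cosets makes the
cocycle a coboundary. Replacing `x` by `a * x` and `h` by `a * h` for `a ∈ H` then reaches every
element of `H ⋊ G/H`.
-/

section Cocycle

variable {D M : Type*} [Group D] [CommGroup M] (κ : D → M →* M) {δ : D → M}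

theorem exists_pow_index_eq_div_of_cocycle [Finite D]
    (hδ : ∀ a c, δ (a * c) = κ a (δ c) * δ a) (E : Subgroup D) (hE : ∀ e ∈ E, δ e = 1) :
    ∃ b : M, ∀ y, δ y ^ E.index = b / κ y b := by
  have : Fintype (D ⧸ E) := Fintype.ofFinite _
  refine ⟨∏ q : D ⧸ E, δ q.out, fun y => ?_⟩
  have hshift : ∀ q : D ⧸ E, δ (y * q.out) = δ (y • q).out := by
    intro q
    obtain ⟨e, he, hmul⟩ : ∃ e ∈ E, y * q.out = (y • q).out * e := by
      refine ⟨((y • q).out)⁻¹ * (y * q.out), QuotientGroup.eq.mp ?_, by group⟩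
      rw [QuotientGroup.out_eq', ← smul_eq_mul, MulAction.Quotient.mk_smul_out]
    rw [hmul, hδ, hE e he, map_one, one_mul]
  have hκ : κ y (∏ q : D ⧸ E, δ q.out) = (∏ q : D ⧸ E, δ q.out) / δ y ^ E.index := by
    calc κ y (∏ q : D ⧸ E, δ q.out) = ∏ q : D ⧸ E, δ (y * q.out) / δ y := by
          rw [map_prod]; simp only [hδ, mul_div_cancel_right]
      _ = (∏ q : D ⧸ E, δ (y • q).out) / δ y ^ E.index := by
          simp only [hshift, Finset.prod_div_distrib, Finset.prod_const, Finset.card_univ,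
            Subgroup.index, Nat.card_eq_fintype_card]
      _ = _ := congrArg (· / _) (Equiv.prod_comp (MulAction.toPerm y) fun q : D ⧸ E => δ q.out)
  rw [hκ, div_div_cancel]

theorem exists_eq_div_of_cocycle [Finite D] [Finite M]
    (hδ : ∀ a c, δ (a * c) = κ a (δ c) * δ a) (E : Subgroup D) (hE : ∀ e ∈ E, δ e = 1)
    (hcop : (Nat.card M).Coprime E.index) :
    ∃ b : M, ∀ y, δ y = κ y b / b := by
  obtain ⟨b₀, hb₀⟩ := exists_pow_index_eq_div_of_cocycle κ hδ E hE
  obtain ⟨b, hb⟩ := hcop.pow_left_bijective.surjective b₀⁻¹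
  refine ⟨b, fun y => hcop.pow_left_bijective.injective ?_⟩
  simp only at hb ⊢
  rw [hb₀, div_pow, ← map_pow, hb, map_inv, inv_div_inv]

theorem exists_div_mem_of_cocycle [Finite D] [Finite M]
    (hδ : ∀ a c, δ (a * c) = κ a (δ c) * δ a) (S : Subgroup M) (hS : ∀ a, S ≤ S.comap (κ a))
    (E : Subgroup D) (hE : ∀ e ∈ E, δ e ∈ S) (hcop : (Nat.card M).Coprime E.index) :
    ∃ b : M, ∀ y, δ y / (κ y b / b) ∈ S := by
  obtain ⟨b, hb⟩ := exists_eq_div_of_cocycle (fun a => QuotientGroup.map S S (κ a) (hS a))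
    (δ := fun y => (δ y : M ⧸ S)) (fun a c => by simp [hδ])
    E (fun e he => (QuotientGroup.eq_one_iff _).mpr (hE e he))
    (Nat.Coprime.coprime_dvd_left (Subgroup.card_quotient_dvd_card S) hcop)
  obtain ⟨b, rfl⟩ := QuotientGroup.mk_surjective b
  exact ⟨b, fun y => (QuotientGroup.eq_one_iff _).mp (by simpa [div_eq_one] using hb y)⟩

end Cocycle

section PGroup

variable {p : ℕ} {G : Type*} [Group G]

theorem commute_of_isPGroup [Finite G]
    (hSyl : ∀ P : Sylow p G, ∀ a b : ↥(P : Subgroup G), a * b = b * a)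
    {K : Subgroup G} (hK : IsPGroup p K) {a b : G} (ha : a ∈ K) (hb : b ∈ K) : Commute a b := by
  obtain ⟨P, hKP⟩ := hK.exists_le_sylow
  exact congrArg Subtype.val (hSyl P ⟨a, hKP ha⟩ ⟨b, hKP hb⟩)

theorem isPGroup_zpowers [Fact p.Prime] {g : G} {k : ℕ} (hg : g ^ p ^ k = 1) :
    IsPGroup p (Subgroup.zpowers g) := by
  obtain ⟨j, -, hj⟩ := (Nat.dvd_prime_pow Fact.out).mp (orderOf_dvd_of_pow_eq_one hg)
  exact IsPGroup.of_card (by rw [Nat.card_zpowers, hj])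

theorem commute_of_commute_quotient [Fact p.Prime] [Finite G]
    (hSyl : ∀ P : Sylow p G, ∀ a b : ↥(P : Subgroup G), a * b = b * a)
    {H : Subgroup G} [H.Normal] (hHp : IsPGroup p H) {a b : G} {i j : ℕ}
    (ha : a ^ p ^ i = 1) (hb : b ^ p ^ j = 1) (hab : Commute (a : G ⧸ H) b) : Commute a b := by
  have hmk : ∀ {g : G} {k : ℕ}, g ^ p ^ k = 1 → (g : G ⧸ H) ^ p ^ k = 1 := fun hg => by
    rw [← QuotientGroup.mk_pow, hg, QuotientGroup.mk_one]
  have hle : Subgroup.zpowers (a : G ⧸ H) ≤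
      Subgroup.normalizer (Subgroup.zpowers (b : G ⧸ H) : Set (G ⧸ H)) := by
    refine (Subgroup.zpowers_le.mpr (Subgroup.mem_centralizer_iff.mpr ?_)).trans
      (Subgroup.centralizer_le_normalizer _)
    rintro _ ⟨k, rfl⟩
    exact (hab.zpow_right k).symm.eq
  have hK := ((isPGroup_zpowers (hmk ha)).to_sup_of_normal_right' (isPGroup_zpowers (hmk hb))
    hle).comap_of_ker_isPGroup (QuotientGroup.mk' H) (by rwa [QuotientGroup.ker_mk'])
  exact commute_of_isPGroup hSyl hK (Subgroup.mem_sup_left (Subgroup.mem_zpowers _))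
    (Subgroup.mem_sup_right (Subgroup.mem_zpowers _))

end PGroup

theorem card_eq_card_ker_mul_card_map {X Q : Type*} [Group X] [Group Q] (π : X →* Q)
    (K : Subgroup X) : Nat.card K = Nat.card (π.comp K.subtype).ker * Nat.card (K.map π) := by
  rw [← (π.comp K.subtype).ker.card_mul_index, Subgroup.index_ker, MonoidHom.range_comp,
    K.range_subtype]

theorem index_eq_of_card_eq {X Y : Type*} [Group X] [Group Y] [Finite X] {K : Subgroup X}
    {L : Subgroup Y} (hXY : Nat.card X = Nat.card Y) (hKL : Nat.card K = Nat.card L) :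
    K.index = L.index :=
  Nat.eq_of_mul_eq_mul_left Nat.card_pos (by rw [K.card_mul_index, hKL, L.card_mul_index, hXY])

section AbelianNormal

open scoped IsMulCommutative commutatorElement

variable {G : Type*} [Group G] {H : Subgroup G}

theorem commutatorElement_mem_right [H.Normal] (a : G) {b : G} (hb : b ∈ H) : ⁅a, b⁆ ∈ H :=
  H.mul_mem (‹H.Normal›.conj_mem b hb a) (H.inv_mem hb)

theorem commutatorElement_mem_iff_commute_mk [H.Normal] {y x : G} :
    ⁅y, x⁆ ∈ H ↔ Commute (y : G ⧸ H) x := by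
  rw [← commutatorElement_eq_one_iff_commute, ← QuotientGroup.eq_one_iff]
  exact Iff.of_eq (congrArg (· = 1) (map_commutatorElement (QuotientGroup.mk' H) y x))

variable [IsMulCommutative H]

theorem conj_eq_self_of_mem {a b : G} (ha : a ∈ H) (hb : b ∈ H) : a * b * a⁻¹ = b := by
  rw [Subgroup.mem_centralizer_iff.mp (H.le_centralizer hb) a ha, mul_inv_cancel_right]

theorem commutatorElement_mul_right_of_mem {y a b : G} (ha : a ∈ H) (hb : ⁅y, b⁆ ∈ H) :
    ⁅y, a * b⁆ = ⁅y, a⁆ * ⁅y, b⁆ := by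
  rw [commutatorElement_mul_right_eq_mul_conj, mul_assoc _ a, mul_assoc,
    conj_eq_self_of_mem ha hb]

theorem commutatorElement_mul_left_of_mem {a y x : G} (ha : a ∈ H) (hy : ⁅y, x⁆ ∈ H) :
    ⁅a * y, x⁆ = ⁅y, x⁆ * ⁅a, x⁆ := by
  rw [commutatorElement_mul_left_eq_conj_mul, conj_eq_self_of_mem ha hy]

variable [H.Normal]

variable (H) in
def commutatorHom (x : G) : H →* G where
  toFun k := ⁅x, (k : G)⁆
  map_one' := commutatorElement_one_right x
  map_mul' a b := commutatorElement_mul_right_of_mem a.2 (commutatorElement_mem_right x b.2)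

@[simp]
theorem commutatorHom_apply (x : G) (k : H) : commutatorHom H x k = ⁅x, (k : G)⁆ := rfl

theorem commutatorHom_range_le (x : G) : (commutatorHom H x).range ≤ H := by
  rintro _ ⟨k, rfl⟩
  exact commutatorElement_mem_right x k.2

theorem commutatorHom_mul_left {a : G} (ha : a ∈ H) (x : G) :
    commutatorHom H (a * x) = commutatorHom H x := by
  ext k
  have hak : ⁅a, (k : G)⁆ = 1 := commutatorElement_eq_one_iff_mul_comm.mpr
    (Subgroup.mem_centralizer_iff.mp (H.le_centralizer k.2) a ha)
  simp only [commutatorHom_apply]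
  rw [commutatorElement_mul_left_eq_conj_mul,
    conj_eq_self_of_mem ha (commutatorElement_mem_right x k.2), hak, mul_one]

theorem conj_mem_commutatorHom_range {x y s : G} (hy : ⁅y, x⁆ ∈ H)
    (hs : s ∈ (commutatorHom H x).range) : y * s * y⁻¹ ∈ (commutatorHom H x).range := by
  obtain ⟨k, rfl⟩ := hs
  refine ⟨⟨y * k * y⁻¹, ‹H.Normal›.conj_mem _ k.2 y⟩, ?_⟩
  conv_lhs => rw [← commutatorHom_mul_left hy x]
  simp only [commutatorHom_apply, commutatorElement_def]
  group

theorem commutatorElement_pow_mem_commutatorHom_range (x : G) {c : G} (hc : c ∈ H) (j : ℕ) :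
    ⁅x ^ j, c⁆ ∈ (commutatorHom H x).range := by
  induction j with
  | zero => simp
  | succ j ih =>
    rw [pow_succ', commutatorElement_mul_left_eq_conj_mul]
    exact mul_mem (conj_mem_commutatorHom_range (by simp) ih) ⟨⟨c, hc⟩, rfl⟩

theorem inv_pow_mul_commutatorElement_pow_mem {x y : G} (hy : ⁅y, x⁆ ∈ H) (j : ℕ) :
    (⁅y, x⁆ ^ j)⁻¹ * ⁅y, x ^ j⁆ ∈ (commutatorHom H x).range := by
  induction j with
  | zero => simp
  | succ j ih =>
    have hconj := commutatorElement_pow_mem_commutatorHom_range x hy j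
    have key : (⁅y, x⁆ ^ (j + 1))⁻¹ * ⁅y, x ^ (j + 1)⁆
        = ⁅y, x⁆⁻¹ * ((⁅y, x⁆ ^ j)⁻¹ * ⁅y, x ^ j⁆ * ⁅x ^ j, ⁅y, x⁆⁆) * ⁅y, x⁆⁻¹⁻¹ := by
      rw [pow_succ x, pow_succ ⁅y, x⁆, commutatorElement_mul_right_eq_mul_conj]
      simp only [commutatorElement_def]
      group
    rw [key, conj_eq_self_of_mem (H.inv_mem hy) (commutatorHom_range_le x (mul_mem ih hconj))]
    exact mul_mem ih hconj

theorem commutatorElement_mem_commutatorHom_range_of_pow_eq_one [Finite G] {p : ℕ}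
    (hp : p.Prime) (hSyl : ∀ P : Sylow p G, ∀ a b : ↥(P : Subgroup G), a * b = b * a)
    (hHp : IsPGroup p H) {x y : G} {k : ℕ} (hy : y ^ p ^ k = 1) (hyx : ⁅y, x⁆ ∈ H) :
    ⁅y, x⁆ ∈ (commutatorHom H x).range := by
  have : Fact p.Prime := ⟨hp⟩
  set n := ordCompl[p] (Nat.card G)
  have hxn : (x ^ n) ^ p ^ (Nat.card G).factorization p = 1 := by
    rw [← pow_mul, mul_comm, Nat.ordProj_mul_ordCompl_eq_self, pow_card_eq_one']
  have hcomm : Commute y (x ^ n) := commute_of_commute_quotient hSyl hHp hy hxn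
    (by rw [QuotientGroup.mk_pow]; exact (commutatorElement_mem_iff_commute_mk.mp hyx).pow_right n)
  have hpow : ⁅y, x⁆ ^ n ∈ (commutatorHom H x).range := by
    simpa [commutatorElement_eq_one_iff_commute.mpr hcomm] using
      inv_pow_mul_commutatorElement_pow_mem hyx n
  have hn : p.Coprime n := hp.coprime_iff_not_dvd.mpr (Nat.not_dvd_ordCompl hp Nat.card_pos.ne')
  obtain ⟨m, hm⟩ := exists_pow_eq_self_of_coprime
    ((Subgroup.orderOf_mk _ hyx ▸ hHp.orderOf_coprime hn ⟨_, hyx⟩).symm)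
  rw [← hm]
  exact pow_mem hpow m

variable (H) in
/-- Modulo `⁅x, H⁆`, the cocycle `y ↦ ⁅y, x⁆`, defined on the `y` whose image in `G ⧸ H` commutes
with that of `x`, is the coboundary `y ↦ ⁅y, h⁆` of `h`. -/
def IsCoboundaryFor (x h : G) : Prop :=
  ∀ y : G, ⁅y, x⁆ ∈ H → ⁅y, x⁆ * ⁅y, h⁆⁻¹ ∈ (commutatorHom H x).range

theorem exists_isCoboundaryFor [Finite G] {p : ℕ} (hp : p.Prime)
    (hSyl : ∀ P : Sylow p G, ∀ a b : ↥(P : Subgroup G), a * b = b * a) (hHp : IsPGroup p H)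
    (x : G) : ∃ h ∈ H, IsCoboundaryFor H x h := by
  have : Fact p.Prime := ⟨hp⟩
  set D := (Subgroup.centralizer {(x : G ⧸ H)}).comap (QuotientGroup.mk' H)
  have hD : ∀ y : D, ⁅(y : G), x⁆ ∈ H := fun y =>
    commutatorElement_mem_iff_commute_mk.mpr (Subgroup.mem_centralizer_singleton_iff.mp y.2)
  obtain ⟨R⟩ : Nonempty (Sylow p D) := inferInstance
  obtain ⟨b, hb⟩ := exists_div_mem_of_cocycle (D := D) (M := H)
    (fun y => (MulAut.conjNormal (y : G)).toMonoidHom) (δ := fun y => ⟨⁅(y : G), x⁆, hD y⟩)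
    (fun a c => Subtype.ext (by simp [commutatorElement_def]; group))
    ((commutatorHom H x).range.subgroupOf H)
    (fun y s hs => by
      exact conj_mem_commutatorHom_range (hD y) (Subgroup.mem_subgroupOf.mp hs))
    R
    (fun e he => by
      obtain ⟨k, hk⟩ := R.2 ⟨e, he⟩
      exact commutatorElement_mem_commutatorHom_range_of_pow_eq_one hp hSyl hHp (k := k)
        (congrArg (fun z : R => ((z : D) : G)) hk) (hD e))
    (by
      obtain ⟨a, ha⟩ := hHp.exists_card_eq
      rw [ha]
      exact Nat.Coprime.pow_left a (hp.coprime_iff_not_dvd.mpr R.not_dvd_index))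
  refine ⟨b, b.2, fun y hy => ?_⟩
  have hby := hb ⟨y, Subgroup.mem_centralizer_singleton_iff.mpr
    (commutatorElement_mem_iff_commute_mk.mp hy)⟩
  rw [Subgroup.mem_subgroupOf] at hby
  convert hby using 1
  simp [commutatorElement_def, div_eq_mul_inv]

theorem IsCoboundaryFor.mul_left {x h a : G} (hxh : IsCoboundaryFor H x h) (hh : h ∈ H)
    (ha : a ∈ H) : IsCoboundaryFor H (a * x) (a * h) := by
  intro y hy
  have hyx : ⁅y, x⁆ ∈ H := by
    rwa [commutatorElement_mem_iff_commute_mk, QuotientGroup.mk_mul,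
      (QuotientGroup.eq_one_iff a).mpr ha, one_mul, ← commutatorElement_mem_iff_commute_mk] at hy
  have hmem := hxh y hyx
  rw [commutatorHom_mul_left ha, commutatorElement_mul_right_of_mem ha hyx,
    commutatorElement_mul_right_of_mem ha (commutatorElement_mem_right y hh)]
  rw [← conj_eq_self_of_mem (commutatorElement_mem_right y ha) (commutatorHom_range_le x hmem)]
    at hmem
  convert hmem using 1
  group

theorem card_ker_centralizer_eq (x : G) :
    Nat.card ((QuotientGroup.mk' H).comp (Subgroup.centralizer {x}).subtype).ker =
      Nat.card (commutatorHom H x).ker :=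
  Nat.card_congr
    { toFun := fun z => ⟨⟨z.1, (QuotientGroup.eq_one_iff _).mp z.2⟩,
        commutatorElement_eq_one_iff_mul_comm.mpr
          (Subgroup.mem_centralizer_singleton_iff.mp z.1.2).symm⟩
      invFun := fun k => ⟨⟨k.1, Subgroup.mem_centralizer_singleton_iff.mpr
        (commutatorElement_eq_one_iff_mul_comm.mp k.2).symm⟩,
        (QuotientGroup.eq_one_iff _).mpr k.1.2⟩
      left_inv := fun _ => rfl
      right_inv := fun _ => rfl }

theorem mem_map_centralizer_iff {x y : G} :
    (y : G ⧸ H) ∈ (Subgroup.centralizer {x}).map (QuotientGroup.mk' H) ↔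
      ⁅y, x⁆ ∈ (commutatorHom H x).range := by
  constructor
  · rintro ⟨z, hz, hzy⟩
    have hk : y * z⁻¹ ∈ H := by
      rw [← QuotientGroup.eq_one_iff, QuotientGroup.mk_mul, QuotientGroup.mk_inv]
      exact mul_inv_eq_one.mpr hzy.symm
    have hzx : ⁅z, x⁆ = 1 := commutatorElement_eq_one_iff_mul_comm.mpr
      (Subgroup.mem_centralizer_singleton_iff.mp hz)
    refine ⟨(⟨y * z⁻¹, hk⟩ : H)⁻¹, ?_⟩
    calc commutatorHom H x (⟨y * z⁻¹, hk⟩ : H)⁻¹ = ⁅y * z⁻¹, x⁆ := by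
          rw [map_inv, commutatorHom_apply, commutatorElement_inv]
      _ = ⁅y * z⁻¹ * z, x⁆ := by
          rw [commutatorElement_mul_left_of_mem hk (hzx ▸ H.one_mem), hzx, one_mul]
      _ = ⁅y, x⁆ := by rw [inv_mul_cancel_right]
  · rintro ⟨k, hk⟩
    refine ⟨k * y, Subgroup.mem_centralizer_singleton_iff.mpr ?_, ?_⟩
    · rw [← commutatorElement_eq_one_iff_mul_comm, commutatorElement_mul_left_of_mem k.2
        (commutatorHom_range_le x ⟨k, hk⟩), ← hk, commutatorHom_apply, ← commutatorElement_inv,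
        inv_mul_cancel]
    · simp [(QuotientGroup.eq_one_iff _).mpr k.2]

theorem mk_mem_centralizer_semidirect_iff {x y : G} {h k : H} :
    (⟨k, (y : G ⧸ H)⟩ : H ⋊[quotConj G H] G ⧸ H) ∈ Subgroup.centralizer {⟨h, (x : G ⧸ H)⟩} ↔
      ⁅y, x⁆ ∈ H ∧ ⁅x, (k : G)⁆ = ⁅y, (h : G)⁆ := by
  have hconj : ∀ g : G, quotConj G H g = MulAut.conjNormal g := quotConj_eq G H mul_comm
  have hcommutator : ∀ (g : G) (a : H), ⁅g, (a : G)⁆ = ((MulAut.conjNormal g a / a : H) : G) :=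
    fun g a => by simp [commutatorElement_def, div_eq_mul_inv]
  rw [Subgroup.mem_centralizer_singleton_iff, SemidirectProduct.ext_iff, and_comm,
    commutatorElement_mem_iff_commute_mk]
  refine and_congr (commute_iff_eq _ _).symm ?_
  simp only [SemidirectProduct.mul_left, hconj, hcommutator, SetLike.coe_eq_coe,
    div_eq_div_iff_mul_eq_mul]
  rw [mul_comm (MulAut.conjNormal x k), mul_comm (MulAut.conjNormal y h), eq_comm]

theorem card_ker_centralizer_semidirect_eq (x : G) (h : H) :
    Nat.card (SemidirectProduct.rightHom.comp (Subgroup.centralizer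
      {(⟨h, (x : G ⧸ H)⟩ : H ⋊[quotConj G H] G ⧸ H)}).subtype).ker =
      Nat.card (commutatorHom H x).ker :=
  Nat.card_congr
    { toFun := fun w => ⟨w.1.1.left, by
        have hw : w.1.1 = ⟨w.1.1.left, ((1 : G) : G ⧸ H)⟩ := SemidirectProduct.ext rfl w.2
        have hk := (mk_mem_centralizer_semidirect_iff.mp (hw ▸ w.1.2)).2
        rwa [commutatorElement_one_left] at hk⟩
      invFun := fun k => ⟨⟨⟨k, ((1 : G) : G ⧸ H)⟩, mk_mem_centralizer_semidirect_iff.mpr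
        ⟨by simp, by rw [commutatorElement_one_left]; exact k.2⟩⟩, rfl⟩
      left_inv := fun w => Subtype.ext (Subtype.ext (SemidirectProduct.ext rfl w.2.symm))
      right_inv := fun _ => rfl }

theorem mem_map_centralizer_semidirect_iff {x y : G} {h : H} :
    (y : G ⧸ H) ∈ (Subgroup.centralizer {(⟨h, (x : G ⧸ H)⟩ : H ⋊[quotConj G H] G ⧸ H)}).map
      SemidirectProduct.rightHom ↔ ⁅y, x⁆ ∈ H ∧ ⁅y, (h : G)⁆ ∈ (commutatorHom H x).range := by
  constructor
  · rintro ⟨⟨k, r⟩, hw, hr⟩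
    obtain rfl : r = y := hr
    obtain ⟨hyx, hk⟩ := mk_mem_centralizer_semidirect_iff.mp hw
    exact ⟨hyx, k, hk⟩
  · rintro ⟨hyx, k, hk⟩
    exact ⟨⟨k, y⟩, mk_mem_centralizer_semidirect_iff.mpr ⟨hyx, hk⟩, rfl⟩

theorem card_centralizer_eq {x h : G} (hh : h ∈ H) (hxh : IsCoboundaryFor H x h) :
    Nat.card (Subgroup.centralizer {x}) =
      Nat.card (Subgroup.centralizer {(⟨⟨h, hh⟩, (x : G ⧸ H)⟩ : H ⋊[quotConj G H] G ⧸ H)}) := by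
  rw [card_eq_card_ker_mul_card_map (QuotientGroup.mk' H),
    card_eq_card_ker_mul_card_map SemidirectProduct.rightHom, card_ker_centralizer_eq,
    card_ker_centralizer_semidirect_eq]
  congr 3
  ext r
  obtain ⟨y, rfl⟩ := QuotientGroup.mk_surjective r
  rw [mem_map_centralizer_iff, mem_map_centralizer_semidirect_iff]
  constructor
  · intro hy
    have hyx := commutatorHom_range_le x hy
    exact ⟨hyx, inv_mem_iff.mp ((Subgroup.mul_mem_cancel_left _ hy).mp (hxh y hyx))⟩
  · rintro ⟨hyx, hyh⟩
    exact (Subgroup.mul_mem_cancel_right _ (inv_mem hyh)).mp (hxh y hyx)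

end AbelianNormal

/-- Let `G` be a finite group whose Sylow `p`-subgroups are abelian and `H`
a normal `p`-subgroup of `G`. Then `N(G) = N(H ⋊ G/H)` for the natural conjugation
action of `G/H` on `H` (which is well defined since such an `H` is abelian). -/
theorem stmt_8 (p : ℕ) (hp : p.Prime) (G : Type*) [Group G] [Finite G]
    (hSyl : ∀ P : Sylow p G, ∀ a b : ↥(P : Subgroup G), a * b = b * a)
    (H : Subgroup G) [H.Normal] (hHp : IsPGroup p ↥H) :
    indexSet G = indexSet (SemidirectProduct ↥H (G ⧸ H) (quotConj G H)) := by
  have : IsMulCommutative H := ⟨⟨fun a b => Subtype.ext (commute_of_isPGroup hSyl hHp a.2 b.2)⟩⟩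
  have hcard : Nat.card G = Nat.card (H ⋊[quotConj G H] G ⧸ H) :=
    (SemidirectProduct.card.trans H.card_mul_index).symm
  ext n
  constructor
  · rintro ⟨x, rfl⟩
    obtain ⟨h, hh, hxh⟩ := exists_isCoboundaryFor hp hSyl hHp x
    exact ⟨_, index_eq_of_card_eq hcard (card_centralizer_eq hh hxh)⟩
  · rintro ⟨⟨k, r⟩, rfl⟩
    obtain ⟨x, rfl⟩ := QuotientGroup.mk_surjective r
    obtain ⟨h, hh, hxh⟩ := exists_isCoboundaryFor hp hSyl hHp x
    have ha : (k : G) * h⁻¹ ∈ H := H.mul_mem k.2 (H.inv_mem hh)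
    have hcent := card_centralizer_eq (H.mul_mem ha hh) (hxh.mul_left hh ha)
    have hγ : (⟨⟨k * h⁻¹ * h, H.mul_mem ha hh⟩, ((k * h⁻¹ * x : G) : G ⧸ H)⟩ :
        H ⋊[quotConj G H] G ⧸ H) = ⟨k, x⟩ :=
      SemidirectProduct.ext (Subtype.ext (inv_mul_cancel_right _ _))
        (by rw [QuotientGroup.mk_mul, (QuotientGroup.eq_one_iff _).mpr ha, one_mul])
    rw [hγ] at hcent
    exact ⟨_, (index_eq_of_card_eq hcard hcent).symm⟩
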